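/- Let G be a graph, M a maximum matching of G, and v a vertex matched by M such that no maximum matching of G leaves v unmatched; suppose v is 'odd-type', i.e., v is reachable from an unmatched vertex by an alternating path of odd length but not of even length. Then v has at least two neighbors in D(G), the set of vertices missed by some maximum matching. -/

import Mathlib

/-- `M` is a maximum matching of `G`: a matching of largest possible cardinality. -/
def IsMaxMatching {V : Type*} [Fintype V] (G : SimpleGraph V) (M : G.Subgraph) : Prop :=
  M.IsMatching ∧ ∀ M' : G.Subgraph, M'.IsMatching → M'.edgeSet.ncard ≤ M.edgeSet.ncard


/-- `AltFrom M b es` : the list of edges `es` alternates membership in `M`,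
the first edge being in `M` iff `b = true`. -/
def AltFrom {V : Type*} (M : Set (Sym2 V)) : Bool → List (Sym2 V) → Prop
  | _, [] => True
  | b, e :: es => (e ∈ M ↔ b = true) ∧ AltFrom M (!b) es

/-- The Gallai-Edmonds set `D(G)`: vertices missed by at least one maximum matching. -/
def GEsetD {V : Type*} [Fintype V] (G : SimpleGraph V) : Set V :=
  {v | ∃ M : G.Subgraph, IsMaxMatching G M ∧ v ∉ M.verts}

open SimpleGraph

lemma altFrom_of_iff {V : Type*} {M M' : Set (Sym2 V)} :
    ∀ (es : List (Sym2 V)) (b : Bool), AltFrom M b es →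
      (∀ e ∈ es, (e ∈ M' ↔ e ∈ M)) → AltFrom M' b es := by
  intro es
  induction es with
  | nil => intro b _ _; trivial
  | cons e es ih =>
    intro b h hiff
    exact ⟨(hiff e (by simp)).trans h.1,
      ih (!b) h.2 (fun e' he' => hiff e' (by simp [he']))⟩

lemma altFrom_append {V : Type*} {M : Set (Sym2 V)} (fs : List (Sym2 V)) :
    ∀ (es : List (Sym2 V)) (b : Bool), AltFrom M b (es ++ fs) →
      AltFrom M b es ∧ AltFrom M (if Even es.length then b else !b) fs := by
  intro es
  induction es with
  | nil => intro b h; exact ⟨trivial, by simpa using h⟩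
  | cons e es ih =>
    intro b h
    obtain ⟨h1, h2⟩ := h
    obtain ⟨h3, h4⟩ := ih (!b) h2
    refine ⟨⟨h1, h3⟩, ?_⟩
    by_cases he : Even es.length
    · have : ¬ Even (e :: es).length := by
        simp [List.length_cons, Nat.even_add_one, he]
      simp only [this, if_false]
      simpa [he] using h4
    · have : Even (e :: es).length := by
        simp [List.length_cons, Nat.even_add_one, he]
      simp only [this, if_true]
      simpa [he, Bool.not_not] using h4

/-- Rotation: if `a` is exposed, `a—b` is an edge of `G` and `b—c` is a matching edge,
then swapping `b—c` for `a—b` gives a matching of the same shape missing `c`. -/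
lemma rotate {V : Type*} {G : SimpleGraph V} (M : G.Subgraph)
    (hm : M.IsMatching) {a b c : V} (ha : a ∉ M.verts) (hab : G.Adj a b)
    (hbc : M.Adj b c) (hac : a ≠ c) :
    ∃ M' : G.Subgraph, M'.IsMatching ∧
      M'.edgeSet = insert s(a, b) (M.edgeSet \ {s(b, c)}) ∧ c ∉ M'.verts := by
  have hmu : ∀ {x y z : V}, M.Adj x y → M.Adj x z → y = z := fun h1 h2 =>
    ((hm (M.edge_vert h1)).unique h1 h2)
  have hab' : a ≠ b := hab.ne
  have hbc' : b ≠ c := (M.adj_sub hbc).ne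
  refine ⟨{ verts := insert a (M.verts \ {c})
            Adj := fun x y => (M.Adj x y ∧ s(x, y) ≠ s(b, c)) ∨ s(x, y) = s(a, b)
            adj_sub := ?_
            edge_vert := ?_
            symm := ?_ }, ?_, ?_, ?_⟩
  · rintro x y (⟨h1, _⟩ | h2)
    · exact M.adj_sub h1
    · rcases Sym2.eq_iff.mp h2 with ⟨rfl, rfl⟩ | ⟨rfl, rfl⟩
      · exact hab
      · exact hab.symm
  · rintro x y (⟨h1, h2⟩ | h2)
    · refine Set.mem_insert_of_mem _ ⟨M.edge_vert h1, ?_⟩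
      rintro rfl
      exact h2 (by rw [hmu h1 hbc.symm, Sym2.eq_swap])
    · rcases Sym2.eq_iff.mp h2 with ⟨rfl, rfl⟩ | ⟨rfl, rfl⟩
      · exact Set.mem_insert _ _
      · exact Set.mem_insert_of_mem _ ⟨M.edge_vert hbc, hbc'⟩
  · refine ⟨?_⟩
    rintro x y (⟨h1, h2⟩ | h2)
    · exact Or.inl ⟨h1.symm, by rwa [Sym2.eq_swap]⟩
    · exact Or.inr (by rwa [Sym2.eq_swap])
  · -- matching
    rintro x (rfl | ⟨hx, hxc⟩)
    · refine ⟨b, Or.inr rfl, ?_⟩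
      rintro y (⟨h1, _⟩ | h2)
      · exact absurd (M.edge_vert h1) ha
      · rcases Sym2.eq_iff.mp h2 with ⟨_, rfl⟩ | ⟨h3, _⟩
        · rfl
        · exact absurd h3 hab'
    · by_cases hxb : x = b
      · subst hxb
        refine ⟨a, Or.inr (Sym2.eq_swap), ?_⟩
        rintro y (⟨h1, h2⟩ | h2)
        · exact absurd (by rw [hmu h1 hbc]) h2
        · rcases Sym2.eq_iff.mp h2 with ⟨h3, _⟩ | ⟨_, rfl⟩
          · exact absurd h3 (fun h => hab' h.symm)
          · rfl
      · obtain ⟨y, hy, hyu⟩ := hm hx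
        have hyc : y ≠ c := by
          rintro rfl
          exact hxb (hmu hy.symm hbc.symm)
        refine ⟨y, Or.inl ⟨hy, ?_⟩, ?_⟩
        · intro h
          rcases Sym2.eq_iff.mp h with ⟨h3, _⟩ | ⟨h4, _⟩
          · exact hxb h3
          · exact hxc (by simp [h4])
        · rintro z (⟨h1, _⟩ | h2)
          · exact hyu z h1
          · rcases Sym2.eq_iff.mp h2 with ⟨rfl, _⟩ | ⟨rfl, _⟩
            · exact absurd hx ha
            · exact absurd rfl hxb
  · -- edgeSet
    ext e
    induction e using Sym2.ind with
    | _ x y =>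
      simp only [Subgraph.mem_edgeSet, Set.mem_insert_iff, Set.mem_diff,
        Set.mem_singleton_iff]
      constructor
      · rintro (⟨h1, h2⟩ | h2)
        · exact Or.inr ⟨Subgraph.mem_edgeSet.mpr h1, h2⟩
        · exact Or.inl h2
      · rintro (h2 | ⟨h1, h2⟩)
        · exact Or.inr h2
        · exact Or.inl ⟨Subgraph.mem_edgeSet.mp h1, h2⟩
  · -- c not in verts
    intro hcv
    rcases hcv with rfl | ⟨_, h⟩
    · exact hac rfl
    · exact h rfl

/-- Flipping a matching along an even-length alternating path from an exposed vertex
yields a matching of equal size missing the far endpoint. -/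
lemma flip_along {V : Type*} [Fintype V] {G : SimpleGraph V} :
    ∀ (n : ℕ) (M : G.Subgraph), M.IsMatching → ∀ {u x : V} (p : G.Walk u x),
      p.length = n → u ∉ M.verts → p.IsPath → Even p.length →
      AltFrom M.edgeSet false p.edges →
      ∃ M' : G.Subgraph, M'.IsMatching ∧ M'.edgeSet.ncard = M.edgeSet.ncard ∧
        x ∉ M'.verts ∧ ∀ e, e ∉ p.edges → (e ∈ M'.edgeSet ↔ e ∈ M.edgeSet) := by
  intro n
  induction n using Nat.strong_induction_on with
  | _ n ih =>
    intro M hm u x p hn hu hp he ha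
    cases p with
    | nil => exact ⟨M, hm, rfl, hu, fun e _ => Iff.rfl⟩
    | cons h q =>
      cases q with
      | nil => simp at he
      | cons h' r =>
        rename_i w1 w2
        -- h : G.Adj u w1, h' : G.Adj w1 w2, r : G.Walk w2 x
        simp only [Walk.edges_cons] at ha
        obtain ⟨ha1, ha2, ha3⟩ := ha
        have he1 : s(u, w1) ∉ M.edgeSet := fun hh => by simpa using ha1.mp hh
        have he2 : s(w1, w2) ∈ M.edgeSet := ha2.mpr rfl
        have hMw : M.Adj w1 w2 := Subgraph.mem_edgeSet.mp he2
        rw [Walk.cons_isPath_iff] at hp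
        obtain ⟨hp1, hup⟩ := hp
        rw [Walk.cons_isPath_iff] at hp1
        obtain ⟨hrp, hw1p⟩ := hp1
        have huw2 : u ≠ w2 := by
          rintro rfl
          exact hup (by simp)
        obtain ⟨M₁, hm₁, hE₁, hw2₁⟩ := rotate M hm hu h hMw huw2
        have hcard₁ : M₁.edgeSet.ncard = M.edgeSet.ncard := by
          rw [hE₁]; exact Set.ncard_exchange he1 he2
        have hnodup : (s(u, w1) :: s(w1, w2) :: r.edges).Nodup := by
          have := (Walk.cons_isPath_iff h _).mpr
            ⟨(Walk.cons_isPath_iff h' r).mpr ⟨hrp, hw1p⟩, hup⟩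
          exact this.isTrail.edges_nodup
        have hne1 : s(u, w1) ∉ r.edges := by
          simp only [List.nodup_cons] at hnodup
          exact fun hh => hnodup.1 (List.mem_cons_of_mem _ hh)
        have hne2 : s(w1, w2) ∉ r.edges := by
          simp only [List.nodup_cons] at hnodup
          exact hnodup.2.1
        have har : AltFrom M₁.edgeSet false r.edges := by
          refine altFrom_of_iff r.edges false ha3 (fun e hee => ?_)
          rw [hE₁]
          simp only [Set.mem_insert_iff, Set.mem_diff, Set.mem_singleton_iff]
          constructor
          · rintro (rfl | ⟨h1, _⟩)
            · exact absurd hee hne1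
            · exact h1
          · intro h1
            refine Or.inr ⟨h1, ?_⟩
            rintro rfl
            exact hne2 hee
        have hlen : r.length < n := by
          simp only [Walk.length_cons] at hn
          omega
        have hreven : Even r.length := by
          simp only [Walk.length_cons] at he
          rcases he with ⟨k, hk⟩
          exact ⟨k - 1, by omega⟩
        obtain ⟨M₂, hm₂, hc₂, hx₂, ht₂⟩ :=
          ih r.length hlen M₁ hm₁ r rfl hw2₁ hrp hreven har
        refine ⟨M₂, hm₂, hc₂.trans hcard₁, hx₂, ?_⟩
        intro e hee
        simp only [Walk.edges_cons, List.mem_cons] at hee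
        push_neg at hee
        obtain ⟨hee1, hee2, hee3⟩ := hee
        rw [ht₂ e hee3, hE₁]
        simp only [Set.mem_insert_iff, Set.mem_diff, Set.mem_singleton_iff]
        constructor
        · rintro (rfl | ⟨h1, _⟩)
          · exact absurd rfl hee1
          · exact h1
        · intro h1
          exact Or.inr ⟨h1, hee2⟩

theorem odd_type_vertex_two_neighbors_in_D {V : Type*} [Fintype V] (G : SimpleGraph V)
    (M : G.Subgraph) (hM : IsMaxMatching G M) (v : V) (hvm : v ∈ M.verts)
    (hnotD : ¬ ∃ M' : G.Subgraph, IsMaxMatching G M' ∧ v ∉ M'.verts)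
    (hoddReach : ∃ u : V, u ∉ M.verts ∧ ∃ p : G.Walk u v,
      p.IsPath ∧ Odd p.length ∧ AltFrom M.edgeSet false p.edges)
    (hnoEvenReach : ¬ ∃ u : V, u ∉ M.verts ∧ ∃ p : G.Walk u v,
      p.IsPath ∧ Even p.length ∧ AltFrom M.edgeSet false p.edges) :
    ∃ a b : V, a ≠ b ∧ G.Adj v a ∧ G.Adj v b ∧ a ∈ GEsetD G ∧ b ∈ GEsetD G := by
  obtain ⟨u, hu, p, hp, hodd, ha⟩ := hoddReach
  obtain ⟨v', hvv', _⟩ := hM.1 hvm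
  -- decompose p = q.concat h with h : G.Adj w v
  obtain ⟨w, hwv, q, hpq⟩ :
      ∃ (w : V) (hwv : G.Adj v w) (q : G.Walk u w), p = q.concat hwv.symm := by
    cases hrev : p.reverse with
    | nil =>
      exfalso
      have : p.length = 0 := by
        have := congrArg Walk.length hrev
        simpa using this
      rw [this] at hodd
      simpa using hodd
    | cons h' q' =>
      rename_i w
      refine ⟨w, h', q'.reverse, ?_⟩
      have := congrArg Walk.reverse hrev
      rw [Walk.reverse_reverse] at this
      rw [this, Walk.reverse_cons]
      rfl
  subst hpq
  have hedges : (q.concat hwv.symm).edges = q.edges ++ [s(w, v)] := by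
    rw [Walk.edges_concat, List.concat_eq_append]
  have hqpath : q.IsPath := by
    rw [Walk.concat_eq_append] at hp
    exact hp.of_append_left
  have hqeven : Even q.length := by
    rw [Walk.length_concat] at hodd
    rcases hodd with ⟨k, hk⟩
    exact ⟨k, by omega⟩
  rw [hedges] at ha
  obtain ⟨haq, halast⟩ := altFrom_append [s(w, v)] q.edges false ha
  rw [Walk.length_edges, if_pos hqeven] at halast
  have hwvM : s(w, v) ∉ M.edgeSet := fun hh => by simpa using halast.1.mp hh
  -- v not in q.support
  have hvq : v ∉ q.support := by
    have := hp.support_nodup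
    rw [Walk.support_concat, List.nodup_append] at this
    intro hh
    exact this.2.2 _ hh _ (List.mem_singleton_self v) rfl
  -- flip along q
  obtain ⟨M₂, hm₂, hc₂, hw₂, ht₂⟩ :=
    flip_along q.length M hM.1 q rfl hu hqpath hqeven haq
  have hvvM : s(v, v') ∈ M.edgeSet := Subgraph.mem_edgeSet.mpr hvv'
  have hvvq : s(v, v') ∉ q.edges := fun hh =>
    hvq (Walk.fst_mem_support_of_mem_edges q hh)
  have hM₂vv : M₂.Adj v v' := Subgraph.mem_edgeSet.mp ((ht₂ _ hvvq).mpr hvvM)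
  have hwv' : w ≠ v' := by
    rintro rfl
    exact hwvM (by rwa [Sym2.eq_swap] at hvvM)
  obtain ⟨M₃, hm₃, hE₃, hv'₃⟩ := rotate M₂ hm₂ hw₂ hwv.symm hM₂vv hwv'
  have hwvM₂ : s(w, v) ∉ M₂.edgeSet := fun hh =>
    hw₂ (M₂.edge_vert (Subgraph.mem_edgeSet.mp hh))
  have hvvM₂ : s(v, v') ∈ M₂.edgeSet := Subgraph.mem_edgeSet.mpr hM₂vv
  have hc₃ : M₃.edgeSet.ncard = M.edgeSet.ncard := by
    rw [hE₃]
    rw [Set.ncard_exchange hwvM₂ hvvM₂]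
    exact hc₂
  have hmax₂ : IsMaxMatching G M₂ :=
    ⟨hm₂, fun N hN => (hM.2 N hN).trans_eq hc₂.symm⟩
  have hmax₃ : IsMaxMatching G M₃ :=
    ⟨hm₃, fun N hN => (hM.2 N hN).trans_eq hc₃.symm⟩
  exact ⟨w, v', hwv', hwv, M.adj_sub hvv', ⟨M₂, hmax₂, hw₂⟩, ⟨M₃, hmax₃, hv'₃⟩⟩
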